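/- Let A ⊆ 𝔽₂ⁿ be a nonempty finite set, V ⊆ 𝔽₂ⁿ a linear subspace, U_A uniform on A, U_V uniform on V, and T any 𝔽₂ⁿ-valued random variable, with U_A, U_V, T mutually independent. Then D_KL(U_V ‖ U_A + T + U_V) = −log₂ Pr[U_A + T ∈ V], and D_KL(U_V ‖ U_A + T) ≥ D_KL(U_V ‖ U_A + T + U_V). -/

import Mathlib

/-! The convolution `U_A + T + U_V` is constant on `V`, where it equals `Pr[U_A + T ∈ V] / |V|`;
hence `D_KL(U_V ‖ U_A + T + U_V) = −log₂ Pr[U_A + T ∈ V]`. For the inequality, Jensen's inequality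
for `log`, weighted by `U_V`, bounds `D_KL(U_V ‖ g)` below by `−log₂ Σ_{x ∈ V} g(x)` for every
nonnegative `g`. -/

open scoped BigOperators Pointwise Classical

noncomputable section

/-- `𝔽₂ⁿ`, the `n`-dimensional vector space over the field with two elements. -/
abbrev F2 (n : ℕ) : Type := Fin n → ZMod 2

/-- `f` is a probability distribution on the finite type `α`. -/
def IsDist {α : Type*} [Fintype α] (f : α → ℝ) : Prop :=
  (∀ x, 0 ≤ f x) ∧ ∑ x, f x = 1

/-- Shannon entropy (base 2) of a distribution on a finite type. -/
def ent {α : Type*} [Fintype α] (f : α → ℝ) : ℝ :=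
  ∑ x, -(f x * Real.logb 2 (f x))

/-- Distribution of `X + Y` for independent `X ∼ f`, `Y ∼ g`. -/
def addDist {α : Type*} [Fintype α] [AddGroup α] (f g : α → ℝ) : α → ℝ :=
  fun s => ∑ x, f x * g (s - x)

/-- Distribution of `X - Y` for independent `X ∼ f`, `Y ∼ g`. -/
def subDist {α : Type*} [Fintype α] [AddGroup α] (f g : α → ℝ) : α → ℝ :=
  fun s => ∑ x, f x * g (x - s)

/-- Entropic Ruzsa distance `d[X;Y] = H(X' + Y') - (H(X) + H(Y))/2` (in `𝔽₂ⁿ`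
addition coincides with subtraction). -/
def rdist {α : Type*} [Fintype α] [AddGroup α] (f g : α → ℝ) : ℝ :=
  ent (addDist f g) - (ent f + ent g) / 2

/-- Entropic Ruzsa distance `d[X;Y] = H(X' - Y') - (H(X) + H(Y))/2` in a general group. -/
def rdistSub {α : Type*} [Fintype α] [AddGroup α] (f g : α → ℝ) : ℝ :=
  ent (subDist f g) - (ent f + ent g) / 2

/-- Pushforward of a distribution along a map. -/
def pmap {α β : Type*} [Fintype α] (h : α → β) (π : α → ℝ) : β → ℝ :=
  fun b => ∑ a, if h a = b then π a else 0

/-- First marginal of a joint distribution. -/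
def margFst {α γ : Type*} [Fintype γ] (π : α × γ → ℝ) : α → ℝ :=
  fun a => ∑ z, π (a, z)

/-- Second marginal of a joint distribution. -/
def margSnd {α γ : Type*} [Fintype α] (π : α × γ → ℝ) : γ → ℝ :=
  fun z => ∑ a, π (a, z)

/-- Conditional distribution of the first coordinate given that the second equals `z`. -/
def condDist {α γ : Type*} [Fintype α] (π : α × γ → ℝ) (z : γ) : α → ℝ :=
  fun a => π (a, z) / margSnd π z

/-- Conditional entropy `H(X | Z) = E_{z ∼ Z} H(X |_{Z = z})`. -/
def condEnt {α γ : Type*} [Fintype α] [Fintype γ] (π : α × γ → ℝ) : ℝ :=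
  ∑ z, margSnd π z * ent (condDist π z)

/-- Mutual information `I(X : Y) = H(X) + H(Y) - H(X, Y)`. -/
def mutInfo {α β : Type*} [Fintype α] [Fintype β] (π : α × β → ℝ) : ℝ :=
  ent (margFst π) + ent (margSnd π) - ent π

/-- Conditional mutual information `I(X : Y | Z) = E_{z ∼ Z} I(X|_{Z=z} : Y|_{Z=z})`. -/
def condMutInfo {α β γ : Type*} [Fintype α] [Fintype β] [Fintype γ]
    (π : (α × β) × γ → ℝ) : ℝ :=
  ∑ z, margSnd π z * mutInfo (condDist π z)

/-- Conditioned Ruzsa distance `d[(X;Y) | Z] = E_{z ∼ Z} d[X|_{Z=z} ; Y|_{Z=z}]`, where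
inside the expectation the two conditioned variables are treated as independent. -/
def condRdist {α γ : Type*} [Fintype α] [Fintype γ] [AddGroup α]
    (π : (α × α) × γ → ℝ) : ℝ :=
  ∑ z, margSnd π z * rdist (pmap Prod.fst (condDist π z)) (pmap Prod.snd (condDist π z))

/-- Doubly conditioned Ruzsa distance `d[X | Z ; Y | W] = E_{z,w} d[X|_{Z=z} ; Y|_{W=w}]`
for `(X,Z)` independent of `(Y,W)`. -/
def condRdist2 {α γ δ : Type*} [Fintype α] [Fintype γ] [Fintype δ] [AddGroup α]
    (π : α × γ → ℝ) (ρ : α × δ → ℝ) : ℝ :=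
  ∑ z, ∑ w, margSnd π z * margSnd ρ w * rdist (condDist π z) (condDist ρ w)

/-- The uniform distribution on a finite set `A`. -/
def unifFin {α : Type*} [Fintype α] (A : Finset α) : α → ℝ :=
  fun x => if x ∈ A then (A.card : ℝ)⁻¹ else 0

/-- The uniform distribution on a set `S`. -/
def unifSet {α : Type*} [Fintype α] (S : Set α) : α → ℝ :=
  fun x => if x ∈ S then (Nat.card S : ℝ)⁻¹ else 0

/-- Kullback–Leibler divergence (base-2 logarithm), with value `⊤` if the support of `f`
is not contained in the support of `g`. -/
def KL {α : Type*} [Fintype α] (f g : α → ℝ) : EReal :=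
  if ∀ x, g x = 0 → f x = 0 then
    ((∑ x, f x * Real.logb 2 (f x / g x) : ℝ) : EReal)
  else ⊤

/-- `τ⁻(X) := inf_T D_KL(X ‖ U_A + T)`, the infimum over all `𝔽₂ⁿ`-valued random
variables `T` independent of `U_A`. -/
def tauMinus {n : ℕ} (A : Finset (F2 n)) (f : F2 n → ℝ) : EReal :=
  ⨅ t : {t : F2 n → ℝ // IsDist t}, KL f (addDist (unifFin A) t.1)

/-- `τ⁺(X) := τ⁻(X) + H(X) - H(U_A)`. -/
def tauPlus {n : ℕ} (A : Finset (F2 n)) (f : F2 n → ℝ) : EReal :=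
  tauMinus A f + ((ent f - ent (unifFin A) : ℝ) : EReal)

/-- `−log₂`, as an extended-real-valued function on `[0, ∞)`, with `−log₂ 0 = +∞`. -/
def neglog2 (p : ℝ) : EReal := if p = 0 then ⊤ else ((-(Real.logb 2 p) : ℝ) : EReal)

theorem unifSet_apply_of_mem {α : Type*} [Fintype α] {S : Set α} {x : α} (hx : x ∈ S) :
    unifSet S x = (Nat.card S : ℝ)⁻¹ :=
  if_pos hx

theorem unifSet_apply_of_notMem {α : Type*} [Fintype α] {S : Set α} {x : α} (hx : x ∉ S) :
    unifSet S x = 0 :=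
  if_neg hx

theorem unifSet_ne_zero_iff {α : Type*} [Fintype α] {S : Set α} (hS : S.Nonempty) {x : α} :
    unifSet S x ≠ 0 ↔ x ∈ S := by
  by_cases hx : x ∈ S
  · simpa [unifSet_apply_of_mem hx, hx] using (hS.natCard_pos S.toFinite).ne'
  · simp [unifSet_apply_of_notMem hx, hx]

theorem isDist_unifSet {α : Type*} [Fintype α] {S : Set α} (hS : S.Nonempty) :
    IsDist (unifSet S) := by
  refine ⟨fun x => by unfold unifSet; positivity, ?_⟩
  have : 0 < Nat.card S := hS.natCard_pos S.toFinite
  simp only [unifSet]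
  rw [← Finset.sum_filter, Finset.sum_const, nsmul_eq_mul, Set.filter_mem_univ_eq_toFinset,
    ← Nat.card_eq_card_toFinset]
  field_simp

theorem unifFin_nonneg {α : Type*} [Fintype α] (A : Finset α) (x : α) : 0 ≤ unifFin A x := by
  unfold unifFin; positivity

theorem addDist_nonneg {α : Type*} [Fintype α] [AddGroup α] {f g : α → ℝ}
    (hf : ∀ x, 0 ≤ f x) (hg : ∀ x, 0 ≤ g x) (s : α) : 0 ≤ addDist f g s :=
  Finset.sum_nonneg fun x _ => mul_nonneg (hf x) (hg _)

theorem addDist_unifSet_of_mem {α : Type*} [Fintype α] [AddGroup α] (H : AddSubgroup α)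
    (g : α → ℝ) {s : α} (hs : s ∈ H) :
    addDist g (unifSet (H : Set α)) s
      = (Nat.card (H : Set α) : ℝ)⁻¹ * ∑ x, if x ∈ H then g x else 0 := by
  rw [Finset.mul_sum]
  refine Finset.sum_congr rfl fun x _ => ?_
  have hsx : s - x ∈ H ↔ x ∈ H := by
    rw [sub_eq_add_neg, H.add_mem_cancel_left hs, H.neg_mem_iff]
  by_cases hx : x ∈ H
  · rw [unifSet_apply_of_mem (hsx.2 hx), if_pos hx, mul_comm]
  · rw [unifSet_apply_of_notMem (hsx.not.2 hx), if_neg hx, mul_zero, mul_zero]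

theorem KL_unifSet_of_forall_mem_eq {α : Type*} [Fintype α] {S : Set α} (hS : S.Nonempty)
    {g : α → ℝ} {c : ℝ} (hg : ∀ x ∈ S, g x = c) :
    KL (unifSet S) g = neglog2 (Nat.card S * c) := by
  have hN : (0 : ℝ) < Nat.card S := by
    exact_mod_cast hS.natCard_pos S.toFinite
  obtain ⟨y, hy⟩ := hS
  by_cases hc : c = 0
  · rw [neglog2, if_pos (by rw [hc, mul_zero]), KL, if_neg]
    push Not
    exact ⟨y, (hg y hy).trans hc, (unifSet_ne_zero_iff ⟨y, hy⟩).2 hy⟩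
  have hsupp : ∀ x, g x = 0 → unifSet S x = 0 := fun x hx =>
    unifSet_apply_of_notMem fun hxS => hc ((hg x hxS).symm.trans hx)
  rw [neglog2, if_neg (mul_ne_zero hN.ne' hc), KL, if_pos hsupp, EReal.coe_eq_coe_iff]
  calc ∑ x, unifSet S x * Real.logb 2 (unifSet S x / g x)
      = ∑ x ∈ S.toFinset, (Nat.card S : ℝ)⁻¹ * Real.logb 2 ((Nat.card S * c)⁻¹) := by
        rw [← Set.filter_mem_univ_eq_toFinset, Finset.sum_filter]
        refine Finset.sum_congr rfl fun x _ => ?_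
        by_cases hx : x ∈ S
        · rw [if_pos hx, unifSet_apply_of_mem hx, hg x hx, mul_inv, div_eq_mul_inv]
        · rw [if_neg hx, unifSet_apply_of_notMem hx, zero_mul]
    _ = -Real.logb 2 (Nat.card S * c) := by
        rw [Finset.sum_const, nsmul_eq_mul, ← Nat.card_eq_card_toFinset, Real.logb_inv,
          ← mul_assoc, mul_inv_cancel₀ hN.ne', one_mul]

theorem KL_unifSet_addDist_unifSet {α : Type*} [Fintype α] [AddGroup α] (H : AddSubgroup α)
    (g : α → ℝ) :
    KL (unifSet (H : Set α)) (addDist g (unifSet (H : Set α)))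
      = neglog2 (∑ x, if x ∈ H then g x else 0) := by
  have hN : (Nat.card (H : Set α) : ℝ) ≠ 0 := by
    exact_mod_cast (Set.Nonempty.natCard_pos (Set.toFinite _) ⟨0, H.zero_mem⟩).ne'
  rw [KL_unifSet_of_forall_mem_eq ⟨0, H.zero_mem⟩ fun s hs => addDist_unifSet_of_mem H g hs,
    ← mul_assoc, mul_inv_cancel₀ hN, one_mul]

theorem neglog2_sum_support_le_KL {α : Type*} [Fintype α] {f g : α → ℝ} (hf : IsDist f)
    (hg : ∀ x, 0 ≤ g x) :
    neglog2 (∑ x, if f x ≠ 0 then g x else 0) ≤ KL f g := by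
  by_cases hsupp : ∀ x, g x = 0 → f x = 0
  swap
  · rw [KL, if_neg hsupp]
    exact le_top
  set P := Finset.univ.filter fun x => f x ≠ 0
  have hfpos : ∀ x ∈ P, 0 < f x := fun x hx => (hf.1 x).lt_of_ne' (Finset.mem_filter.1 hx).2
  have hgpos : ∀ x ∈ P, 0 < g x := fun x hx =>
    (hg x).lt_of_ne' fun h => (hfpos x hx).ne' (hsupp x h)
  have hfP : ∑ x ∈ P, f x = 1 := by rw [Finset.sum_filter_ne_zero, hf.2]
  have hqpos : 0 < ∑ x ∈ P, g x :=
    Finset.sum_pos hgpos (Finset.nonempty_of_sum_ne_zero (hfP ▸ one_ne_zero))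
  have hjensen : ∑ x ∈ P, f x * Real.log (g x / f x) ≤ Real.log (∑ x ∈ P, g x) := by
    have h := strictConcaveOn_log_Ioi.concaveOn.le_map_sum (t := P) (w := f)
      (p := fun x => g x / f x) (fun x _ => hf.1 x) hfP
      (fun x hx => div_pos (hgpos x hx) (hfpos x hx))
    have hsum : ∑ x ∈ P, f x • (g x / f x) = ∑ x ∈ P, g x :=
      Finset.sum_congr rfl fun x hx => mul_div_cancel₀ (g x) (hfpos x hx).ne'
    rw [hsum] at h
    simpa only [smul_eq_mul] using h
  have hKL : ∑ x, f x * Real.logb 2 (f x / g x)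
      = -(∑ x ∈ P, f x * Real.log (g x / f x)) / Real.log 2 := by
    rw [← Finset.sum_filter_of_ne fun x _ h => left_ne_zero_of_mul h, neg_div, Finset.sum_div,
      ← Finset.sum_neg_distrib]
    refine Finset.sum_congr rfl fun x _ => ?_
    rw [Real.logb, ← inv_div (g x) (f x), Real.log_inv]
    ring
  rw [← Finset.sum_filter, neglog2, if_neg hqpos.ne', KL, if_pos hsupp, EReal.coe_le_coe_iff,
    hKL, Real.logb, neg_div]
  exact neg_le_neg (div_le_div_of_nonneg_right hjensen (Real.log_pos one_lt_two).le)

theorem stmt_19_general (n : ℕ) (A : Finset (F2 n))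
    (V : Submodule (ZMod 2) (F2 n)) (t : F2 n → ℝ) (ht : IsDist t) :
    (KL (unifSet (V : Set (F2 n)))
        (addDist (addDist (unifFin A) t) (unifSet (V : Set (F2 n))))
      = neglog2 (∑ x, if x ∈ V then addDist (unifFin A) t x else 0))
    ∧ KL (unifSet (V : Set (F2 n)))
        (addDist (addDist (unifFin A) t) (unifSet (V : Set (F2 n))))
      ≤ KL (unifSet (V : Set (F2 n))) (addDist (unifFin A) t) := by
  have hV : (V : Set (F2 n)).Nonempty := ⟨0, V.zero_mem⟩
  have hproj := KL_unifSet_addDist_unifSet V.toAddSubgroup (addDist (unifFin A) t)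
  refine ⟨hproj, hproj ▸ ?_⟩
  have hgibbs := neglog2_sum_support_le_KL (isDist_unifSet hV)
    (addDist_nonneg (unifFin_nonneg A) ht.1)
  simp only [unifSet_ne_zero_iff hV] at hgibbs
  exact hgibbs

/-- for `U_A` uniform on a nonempty finite `A ⊆ 𝔽₂ⁿ`, `U_V` uniform on a
linear subspace `V`, and any `𝔽₂ⁿ`-valued `T ∼ t`, with `U_A, U_V, T` mutually independent:
`D_KL(U_V ‖ U_A + T + U_V) = −log₂ Pr[U_A + T ∈ V]`, and
`D_KL(U_V ‖ U_A + T) ≥ D_KL(U_V ‖ U_A + T + U_V)`. -/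
theorem stmt_19 (n : ℕ) (A : Finset (F2 n)) (hA : A.Nonempty)
    (V : Submodule (ZMod 2) (F2 n)) (t : F2 n → ℝ) (ht : IsDist t) :
    (KL (unifSet (V : Set (F2 n)))
        (addDist (addDist (unifFin A) t) (unifSet (V : Set (F2 n))))
      = neglog2 (∑ x, if x ∈ V then addDist (unifFin A) t x else 0))
    ∧ KL (unifSet (V : Set (F2 n)))
        (addDist (addDist (unifFin A) t) (unifSet (V : Set (F2 n))))
      ≤ KL (unifSet (V : Set (F2 n))) (addDist (unifFin A) t) :=
  stmt_19_general n A V t ht
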